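/- Let 𝔮 be the 5-dimensional nilpotent Lie algebra with dual basis e¹,…,e⁵ and structure equations de⁵ = e¹³ + e⁴², deⁱ = 0 for i = 1,…,4 (Chevalley–Eilenberg differential). Set σ₁ = e¹²+e³⁴, σ₂ = e¹³+e⁴², σ₃ = e¹⁴+e²³. Then on 𝔮 ⊕ ℝ (with extra coordinate t and d t = 0 extended by the Leibniz rule), the 2-form ω = d(t·e⁵) = dt ∧ e⁵ + t·σ₂ is closed, and the 3-form Ω⁺ := Re[ t(σ₃ + iσ₁) ∧ (−t^{−2}e⁵ + i t² dt) ] = −t^{−1}·σ₃ ∧ e⁵ − t³·σ₁ ∧ dt satisfies dΩ⁺ = −t^{−1} dt ∧ Ω⁺, equivalently d(t·Ω⁺) = 0. -/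

import Mathlib

/-!
The covectors `e¹, …, e⁴` are closed, so the Leibniz rule gives `dσ₁ = dσ₂ = 0` and
`d(σ₃ ∧ e⁵) = σ₃ ∧ de⁵ = σ₃ ∧ σ₂`, which vanishes because each of its four monomials repeats a
covector. What remains is the `t`-derivative: `d/dt (−t⁻¹) = t⁻²`, and `dν = −t³·dσ₁ = 0`.
-/

namespace ExteriorAlgebra

variable {R M : Type*} [CommRing R] [AddCommGroup M] [Module R M]

theorem ι_mul_ι_mul_ι_mul_ι_eq_zero_of_eq (f : Fin 4 → M) {i j : Fin 4} (h : f i = f j)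
    (hij : i ≠ j) : ι R (f 0) * ι R (f 1) * (ι R (f 2) * ι R (f 3)) = 0 := by
  have := (ιMulti R 4).map_eq_zero_of_eq f h hij
  simp only [ιMulti_apply, List.ofFn_succ, List.ofFn_zero, List.prod_cons, List.prod_nil,
    mul_one, mul_assoc] at this ⊢
  exact this

/-- With `(a, b, c, f) = (e¹, e⁴, e², e³)` this is `σ₃ ∧ σ₂ = 0`. -/
theorem two_form_mul_two_form_eq_zero (a b c f : M) :
    (ι R a * ι R b + ι R c * ι R f) * (ι R a * ι R f + ι R b * ι R c) = 0 := by
  have h₁ : ι R a * ι R b * (ι R a * ι R f) = 0 :=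
    ι_mul_ι_mul_ι_mul_ι_eq_zero_of_eq ![a, b, a, f] (i := 0) (j := 2) rfl (by decide)
  have h₂ : ι R a * ι R b * (ι R b * ι R c) = 0 :=
    ι_mul_ι_mul_ι_mul_ι_eq_zero_of_eq ![a, b, b, c] (i := 1) (j := 2) rfl (by decide)
  have h₃ : ι R c * ι R f * (ι R a * ι R f) = 0 :=
    ι_mul_ι_mul_ι_mul_ι_eq_zero_of_eq ![c, f, a, f] (i := 1) (j := 3) rfl (by decide)
  have h₄ : ι R c * ι R f * (ι R b * ι R c) = 0 :=
    ι_mul_ι_mul_ι_mul_ι_eq_zero_of_eq ![c, f, b, c] (i := 0) (j := 3) rfl (by decide)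
  rw [add_mul, mul_add, mul_add, h₁, h₂, h₃, h₄, add_zero, add_zero]

variable (d : ExteriorAlgebra R M →ₗ[R] ExteriorAlgebra R M)

theorem map_two_form_eq_zero
    (hLeib2 : ∀ v w : M, d (ι R v * ι R w) = d (ι R v) * ι R w - ι R v * d (ι R w))
    {a b c f : M} (ha : d (ι R a) = 0) (hb : d (ι R b) = 0) (hc : d (ι R c) = 0)
    (hf : d (ι R f) = 0) : d (ι R a * ι R b + ι R c * ι R f) = 0 := by
  simp [hLeib2, ha, hb, hc, hf]

theorem map_two_form_mul_ι
    (hLeib3 : ∀ u v w : M, d (ι R u * (ι R v * ι R w)) =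
      d (ι R u) * (ι R v * ι R w) - ι R u * d (ι R v) * ι R w + ι R u * ι R v * d (ι R w))
    {a b c f : M} (g : M) (ha : d (ι R a) = 0) (hb : d (ι R b) = 0) (hc : d (ι R c) = 0)
    (hf : d (ι R f) = 0) :
    d ((ι R a * ι R b + ι R c * ι R f) * ι R g) = (ι R a * ι R b + ι R c * ι R f) * d (ι R g) := by
  simp [add_mul, mul_assoc, hLeib3, ha, hb, hc, hf]

end ExteriorAlgebra

open ExteriorAlgebra

/-- On the nilpotent Lie algebra `𝔮 = (0,0,0,0,13+42)` (Chevalley–Eilenberg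
differential `d` with `de⁵ = e¹³ + e⁴²`, `deⁱ = 0` for `i ≤ 4`, extended as a graded
derivation), consider forms on `𝔮 ⊕ ℝ` written as `μ(t) + dt ∧ ν(t)` with exterior
derivative `(μ, ν) ↦ (dμ, μ' − dν)`.  Then `ω = d(t·e⁵) = dt∧e⁵ + t·σ₂` is closed
(both components of its derivative vanish), and
`Ω⁺ = −t⁻¹·σ₃∧e⁵ − t³·σ₁∧dt` (i.e. `μ = −t⁻¹·σ₃∧e⁵`, `ν = −t³·σ₁`) satisfies
`dΩ⁺ = −t⁻¹·dt∧Ω⁺`, whose components read `dμ = 0` and `μ' − dν = −t⁻¹·μ`. -/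
theorem stmt_14
    (d : ExteriorAlgebra ℝ (Fin 5 → ℝ) →ₗ[ℝ] ExteriorAlgebra ℝ (Fin 5 → ℝ))
    (e : Fin 5 → ExteriorAlgebra ℝ (Fin 5 → ℝ))
    (he : ∀ i, e i = ExteriorAlgebra.ι ℝ (Pi.single i 1))
    (σ₁ σ₂ σ₃ : ExteriorAlgebra ℝ (Fin 5 → ℝ))
    (hσ₁ : σ₁ = e 0 * e 1 + e 2 * e 3)
    (hσ₂ : σ₂ = e 0 * e 2 + e 3 * e 1)
    (hσ₃ : σ₃ = e 0 * e 3 + e 1 * e 2)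
    (hd0 : ∀ i : Fin 5, i ≠ 4 → d (e i) = 0)
    (hd4 : d (e 4) = σ₂)
    (hLeib2 : ∀ v w : Fin 5 → ℝ,
      d (ExteriorAlgebra.ι ℝ v * ExteriorAlgebra.ι ℝ w) =
        d (ExteriorAlgebra.ι ℝ v) * ExteriorAlgebra.ι ℝ w -
          ExteriorAlgebra.ι ℝ v * d (ExteriorAlgebra.ι ℝ w))
    (hLeib3 : ∀ u v w : Fin 5 → ℝ,
      d (ExteriorAlgebra.ι ℝ u * (ExteriorAlgebra.ι ℝ v * ExteriorAlgebra.ι ℝ w)) =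
        d (ExteriorAlgebra.ι ℝ u) * (ExteriorAlgebra.ι ℝ v * ExteriorAlgebra.ι ℝ w) -
          ExteriorAlgebra.ι ℝ u * d (ExteriorAlgebra.ι ℝ v) * ExteriorAlgebra.ι ℝ w +
          ExteriorAlgebra.ι ℝ u * ExteriorAlgebra.ι ℝ v * d (ExteriorAlgebra.ι ℝ w)) :
    (∀ t : ℝ, d (t • σ₂) = 0 ∧ (deriv (fun u : ℝ => u) t) • σ₂ - d (e 4) = 0) ∧
    (∀ t : ℝ, t ≠ 0 →
      d ((-(t⁻¹)) • (σ₃ * e 4)) = 0 ∧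
      (deriv (fun u : ℝ => -(u⁻¹)) t) • (σ₃ * e 4) - d ((-(t ^ 3)) • σ₁) =
        (-(t⁻¹)) • ((-(t⁻¹)) • (σ₃ * e 4))) := by
  obtain rfl : e = fun i => ι ℝ (Pi.single i 1) := funext he
  have h0 := hd0 0 (by decide)
  have h1 := hd0 1 (by decide)
  have h2 := hd0 2 (by decide)
  have h3 := hd0 3 (by decide)
  have hdσ₁ : d σ₁ = 0 := hσ₁ ▸ map_two_form_eq_zero d hLeib2 h0 h1 h2 h3
  have hdσ₂ : d σ₂ = 0 := hσ₂ ▸ map_two_form_eq_zero d hLeib2 h0 h2 h3 h1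
  have hdσ₃e₄ : d (σ₃ * ι ℝ (Pi.single 4 1)) = 0 := by
    rw [hσ₃, map_two_form_mul_ι d hLeib3 _ h0 h3 h1 h2, hd4, hσ₂,
      two_form_mul_two_form_eq_zero]
  have hderiv : deriv (fun u : ℝ => -(u⁻¹)) = fun t => (t ^ 2)⁻¹ := by
    ext t
    rw [deriv.fun_neg, deriv_inv, neg_neg]
  refine ⟨fun t => ⟨by rw [map_smul, hdσ₂, smul_zero], by simp [hd4]⟩,
    fun t _ => ⟨by rw [map_smul, hdσ₃e₄, smul_zero], ?_⟩⟩
  rw [hderiv, map_smul, hdσ₁, smul_zero, sub_zero, smul_smul]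
  congr 1
  ring
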